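/- Let T = (n; δ, σ) with δ ≥ 2|σ| > 0, and let R ∈ ℝ^{n×n} be upper triangular with positive diagonal entries such that RᵀR = T. Then: (i) r_{1,1} ≥ 2|r_{1,2}|; (ii) for each i = 2,…,n, r_{i−1,i−1} > |r_{i−1,i}| if and only if r_{i,i} > |r_{i−1,i}|; (iii) for each i = 2,…,n−1, r_{i,i} > |r_{i−1,i}| if and only if r_{i,i} > |r_{i,i+1}|. -/
import Mathlib


open Real Filter

noncomputable def tridiag (n : ℕ) (d s : ℝ) : Matrix (Fin n) (Fin n) ℝ :=
  Matrix.of fun i j =>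
    if (i : ℕ) = (j : ℕ) then d
    else if (i : ℕ) + 1 = (j : ℕ) ∨ (j : ℕ) + 1 = (i : ℕ) then s else 0

noncomputable def lam (n : ℕ) (δ σ : ℝ) (h : ℕ) : ℝ :=
  δ + 2 * σ * Real.cos (h * Real.pi / (n + 1))

noncomputable def kap (n h : ℕ) : ℝ :=
  Real.sqrt (1 / (n : ℝ) + 2 / ((n : ℝ) - 1) * Real.cos (h * Real.pi / (n + 1)) ^ 2)

noncomputable def evec (n h : ℕ) : Fin n → ℝ :=
  fun k => Real.sqrt (2 / (n + 1)) * Real.sin (h * (k.1 + 1) * Real.pi / (n + 1))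

noncomputable def frobNorm {n : ℕ} (A : Matrix (Fin n) (Fin n) ℝ) : ℝ :=
  Real.sqrt (∑ i, ∑ j, A i j ^ 2)

set_option maxHeartbeats 1000000 in
/-- for `T = (n; δ, σ)` with `δ ≥ 2|σ| > 0` and Cholesky factor `R`:
(i) `r₁₁ ≥ 2|r₁₂|`; (ii) `r_{i−1,i−1} > |r_{i−1,i}|` iff `r_{i,i} > |r_{i−1,i}|`;
(iii) `r_{i,i} > |r_{i−1,i}|` iff `r_{i,i} > |r_{i,i+1}|`. -/
theorem stmt_15 (n : ℕ) (hn : 2 ≤ n) (δ σ : ℝ) (hσ : 0 < |σ|) (hδ : 2 * |σ| ≤ δ)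
    (R : Matrix (Fin n) (Fin n) ℝ)
    (hupper : ∀ i j : Fin n, (j : ℕ) < (i : ℕ) → R i j = 0)
    (hdiagpos : ∀ i : Fin n, 0 < R i i)
    (hfact : R.transpose * R = tridiag n δ σ) :
    2 * |R ⟨0, by omega⟩ ⟨1, by omega⟩| ≤ R ⟨0, by omega⟩ ⟨0, by omega⟩ ∧
    (∀ (j : ℕ) (hj : j + 1 < n),
      (|R ⟨j, by omega⟩ ⟨j + 1, hj⟩| < R ⟨j, by omega⟩ ⟨j, by omega⟩ ↔
       |R ⟨j, by omega⟩ ⟨j + 1, hj⟩| < R ⟨j + 1, hj⟩ ⟨j + 1, hj⟩)) ∧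
    (∀ (j : ℕ) (hj : j + 2 < n),
      (|R ⟨j, by omega⟩ ⟨j + 1, by omega⟩| < R ⟨j + 1, by omega⟩ ⟨j + 1, by omega⟩ ↔
       |R ⟨j + 1, by omega⟩ ⟨j + 2, hj⟩| < R ⟨j + 1, by omega⟩ ⟨j + 1, by omega⟩)) := by
  have hσ0 : σ ≠ 0 := fun h => by simp [h] at hσ
  have hmul : ∀ i j : Fin n, ∑ k, R k i * R k j = tridiag n δ σ i j := by
    intro i j
    have := congrFun (congrFun hfact i) j
    simpa [Matrix.mul_apply, Matrix.transpose_apply] using this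
  -- R is upper bidiagonal
  have hbid : ∀ m : ℕ, ∀ i j : Fin n, (i : ℕ) = m → (i : ℕ) + 1 < (j : ℕ) → R i j = 0 := by
    intro m
    induction m using Nat.strong_induction_on with
    | _ m ih =>
      intro i j him hij
      have hsum := hmul i j
      have hT : tridiag n δ σ i j = 0 := by
        simp only [tridiag, Matrix.of_apply]
        rw [if_neg (by omega), if_neg (by omega)]
      rw [hT] at hsum
      have hone : ∑ k, R k i * R k j = R i i * R i j := by
        apply Finset.sum_eq_single i
        · intro k _ hk
          have hk' : (k : ℕ) ≠ (i : ℕ) := fun h => hk (Fin.ext h)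
          rcases lt_or_gt_of_ne hk' with h | h
          · rw [ih k.val (by omega) k j rfl (by omega), mul_zero]
          · rw [hupper k i h, zero_mul]
        · intro h; exact absurd (Finset.mem_univ i) h
      rw [hone] at hsum
      exact (mul_eq_zero.mp hsum).resolve_left (hdiagpos i).ne'
  have hbid' : ∀ i j : Fin n, (i : ℕ) + 1 < (j : ℕ) → R i j = 0 :=
    fun i j h => hbid i.val i j rfl h
  -- superdiagonal relation: R i i * R i j = σ for consecutive i j
  have hkey1 : ∀ i j : Fin n, (i : ℕ) + 1 = (j : ℕ) → R i i * R i j = σ := by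
    intro i j hij
    have hsum := hmul i j
    have hT : tridiag n δ σ i j = σ := by
      simp only [tridiag, Matrix.of_apply]
      rw [if_neg (by omega), if_pos (by omega)]
    rw [hT] at hsum
    rw [← hsum]
    symm
    apply Finset.sum_eq_single i
    · intro k _ hk
      have hk' : (k : ℕ) ≠ (i : ℕ) := fun h => hk (Fin.ext h)
      rcases lt_or_gt_of_ne hk' with h | h
      · rw [hbid' k j (by omega), mul_zero]
      · rw [hupper k i h, zero_mul]
    · intro h; exact absurd (Finset.mem_univ i) h
  -- diagonal relation for j with predecessor i
  have hkey2 : ∀ i j : Fin n, (i : ℕ) + 1 = (j : ℕ) → R i j ^ 2 + R j j ^ 2 = δ := by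
    intro i j hij
    have hsum := hmul j j
    have hT : tridiag n δ σ j j = δ := by
      simp [tridiag]
    rw [hT] at hsum
    have hij' : i ≠ j := fun h => by rw [h] at hij; omega
    have hone : ∑ k, R k j * R k j = R i j * R i j + R j j * R j j := by
      rw [← Finset.sum_subset (Finset.subset_univ ({i, j} : Finset (Fin n)))]
      · rw [Finset.sum_pair hij']
      · intro k _ hk
        simp only [Finset.mem_insert, Finset.mem_singleton] at hk
        push_neg at hk
        have hk1 : (k : ℕ) ≠ (i : ℕ) := fun h => hk.1 (Fin.ext h)
        have hk2 : (k : ℕ) ≠ (j : ℕ) := fun h => hk.2 (Fin.ext h)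
        rcases lt_or_gt_of_ne hk2 with h | h
        · rw [hbid' k j (by omega), mul_zero]
        · rw [hupper k j h, zero_mul]
    rw [hone] at hsum
    nlinarith [hsum]
  -- diagonal relation at 0
  have hkey0 : ∀ j : Fin n, (j : ℕ) = 0 → R j j ^ 2 = δ := by
    intro j hj
    have hsum := hmul j j
    have hT : tridiag n δ σ j j = δ := by
      simp [tridiag]
    rw [hT] at hsum
    have hone : ∑ k, R k j * R k j = R j j * R j j := by
      apply Finset.sum_eq_single j
      · intro k _ hk
        have hk' : (k : ℕ) ≠ (j : ℕ) := fun h => hk (Fin.ext h)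
        rw [hupper k j (by omega), zero_mul]
      · intro h; exact absurd (Finset.mem_univ j) h
    rw [hone] at hsum
    nlinarith [hsum]
  -- invariant: δ ≤ 2 * (R j j)^2
  have hinv : ∀ m : ℕ, ∀ j : Fin n, (j : ℕ) = m → δ ≤ 2 * R j j ^ 2 := by
    intro m
    induction m with
    | zero =>
      intro j hj
      have := hkey0 j hj
      nlinarith [hσ, hδ]
    | succ m ih =>
      intro j hj
      have hm : m < n := by omega
      set i : Fin n := ⟨m, hm⟩ with hi
      have hij : (i : ℕ) + 1 = (j : ℕ) := by simp [hi, hj]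
      have h1 := hkey1 i j hij
      have h2 := hkey2 i j hij
      have h3 := ih i rfl
      have h4 : 0 < R i i := hdiagpos i
      have hδpos : 0 < δ := lt_of_lt_of_le (by linarith) hδ
      have h1sq : R i i ^ 2 * R i j ^ 2 = σ ^ 2 := by rw [← h1]; ring
      have h5 : 4 * σ ^ 2 ≤ δ ^ 2 := by nlinarith [sq_abs σ]
      nlinarith [mul_le_mul_of_nonneg_right h3 (sq_nonneg (R i j)), hδpos, h1sq, h5]
  have hinv' : ∀ j : Fin n, δ ≤ 2 * R j j ^ 2 := fun j => hinv j.val j rfl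
  have hδpos : 0 < δ := lt_of_lt_of_le (by linarith) hδ
  have habs : ∀ i j : Fin n, (i : ℕ) + 1 = (j : ℕ) → R i i * |R i j| = |σ| := by
    intro i j h
    rw [← hkey1 i j h, abs_mul, abs_of_pos (hdiagpos i)]
  have habssq : ∀ i j : Fin n, (i : ℕ) + 1 = (j : ℕ) → R i i ^ 2 * R i j ^ 2 = |σ| ^ 2 := by
    intro i j h
    rw [← habs i j h, mul_pow, sq_abs]
  have hbpos : ∀ i j : Fin n, (i : ℕ) + 1 = (j : ℕ) → 0 < |R i j| := by
    intro i j h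
    rcases abs_pos.2 (fun h0 : R i j = 0 => hσ0 (by rw [← hkey1 i j h, h0, mul_zero])) with h'
    exact h'
  -- weak bound: (superdiagonal)^2 ≤ |σ|
  have hweak : ∀ i j : Fin n, (i : ℕ) + 1 = (j : ℕ) → R i j ^ 2 ≤ |σ| := by
    intro i j h
    have h1 := habssq i j h
    have h2 := hinv' i
    nlinarith [sq_nonneg (R i j), hσ, hδ, mul_le_mul_of_nonneg_right h2 (sq_nonneg (R i j))]
  -- strict bound
  have hstrict : ∀ i j : Fin n, (i : ℕ) + 1 = (j : ℕ) → 2 * R i j ^ 2 < δ → R i j ^ 2 < |σ| := by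
    intro i j h ht
    have h1 := habssq i j h
    have h2 := hinv' i
    nlinarith [mul_le_mul_of_nonneg_right h2 (sq_nonneg (R i j)),
      mul_pos hσ (by linarith : (0:ℝ) < δ - 2 * R i j ^ 2), hσ, hδ]
  refine ⟨?_, ?_, ?_⟩
  · -- part (i)
    set i0 : Fin n := ⟨0, by omega⟩
    set i1 : Fin n := ⟨1, by omega⟩
    have hab := habs i0 i1 rfl
    have h0 := hkey0 i0 rfl
    have ha := hdiagpos i0
    have hB := abs_nonneg (R i0 i1)
    nlinarith [hab, h0, ha, hB, hδ, hσ]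
  · -- part (ii)
    intro j hj
    set i : Fin n := ⟨j, by omega⟩
    set j' : Fin n := ⟨j + 1, hj⟩
    have hij : (i : ℕ) + 1 = (j' : ℕ) := rfl
    have hab := habs i j' hij
    have h2 := hkey2 i j' hij
    have ha := hdiagpos i
    have hc := hdiagpos j'
    have hB := hbpos i j' hij
    have hsq := sq_abs (R i j')
    constructor
    · intro h
      -- |b| < a  ⟹  |b| < c
      have h1 : R i j' ^ 2 < |σ| := by
        nlinarith [mul_lt_mul_of_pos_left h hB]
      nlinarith [abs_nonneg (R i j'), hc, hδ]
    · intro h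
      -- |b| < c  ⟹  |b| < a
      have h1 : R i j' ^ 2 < |σ| := by
        apply hstrict i j' hij
        nlinarith [abs_nonneg (R i j')]
      nlinarith [hB, ha]
  · -- part (iii)
    intro j hj
    set i : Fin n := ⟨j, by omega⟩
    set j' : Fin n := ⟨j + 1, by omega⟩
    set k : Fin n := ⟨j + 2, hj⟩
    have hij : (i : ℕ) + 1 = (j' : ℕ) := rfl
    have hjk : (j' : ℕ) + 1 = (k : ℕ) := rfl
    have hab := habs i j' hij
    have hcd := habs j' k hjk
    have h2 := hkey2 i j' hij
    have hc := hdiagpos j'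
    have hD := hbpos j' k hjk
    have hBnn := abs_nonneg (R i j')
    have hsq := sq_abs (R i j')
    have hw := hweak i j' hij
    constructor
    · intro h
      -- |b| < c  ⟹  |d| < c
      have h1 : R i j' ^ 2 < |σ| := by
        apply hstrict i j' hij
        nlinarith []
      -- c^2 > |σ| = c * |d|  ⟹  |d| < c
      nlinarith [hc, hδ]
    · intro h
      -- |d| < c  ⟹  |b| < c
      have h1 : |σ| < R j' j' ^ 2 := by
        nlinarith [mul_lt_mul_of_pos_left h hc]
      nlinarith [hc]
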